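/- arXiv:2203.12549 — 2 statements merged into one kernel-verified Lean document; each statement's English description precedes it below -/
import Mathlib

section
/- If a matroid M has a double circuit D of degree j (i.e., whose circuit partition has j parts), then M has a minor isomorphic to the uniform matroid U_{j−2,j}. -/
open Set

namespace Paper

/-! ### Multigraphs, walks, cycles -/

/-- A multigraph on vertex type `V` with edge type `E`: each edge has an
unordered pair of endpoints (possibly equal, giving a loop). -/
structure Multigraph (V : Type*) (E : Type*) where
  inc : E → Sym2 V

namespace Multigraph

variable {V E : Type*}

/-- `G.IsWalk I u es vs`: starting at vertex `u` and using only edges in `I`,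
the edges `es` form a walk that successively visits the vertices `vs`. -/
inductive IsWalk (G : Multigraph V E) (I : Set E) : V → List E → List V → Prop
  | nil (v : V) : IsWalk G I v [] []
  | cons {u v : V} {e : E} {es : List E} {vs : List V} :
      e ∈ I → G.inc e = s(u, v) → IsWalk G I v es vs → IsWalk G I u (e :: es) (v :: vs)

/-- A walk from `u` to `w` inside the edge set `I`. -/
def IsWalkFrom (G : Multigraph V E) (I : Set E) (u : V) (es : List E) (vs : List V)
    (w : V) : Prop :=
  G.IsWalk I u es vs ∧ (u :: vs).getLast (by simp) = w

/-- `u` and `w` are joined by a walk using edges of `I` (same component of `G[I]`). -/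
def Reachable (G : Multigraph V E) (I : Set E) (u w : V) : Prop :=
  ∃ es vs, G.IsWalkFrom I u es vs w

/-- A cycle based at `v` using edges of `I`: a nonempty closed walk with no repeated
edges and no repeated vertices (except for the base point).  A loop is a cycle of
length `1` and a pair of parallel edges forms a cycle of length `2`. -/
def IsCycle (G : Multigraph V E) (I : Set E) (v : V) (es : List E) (vs : List V) : Prop :=
  G.IsWalkFrom I v es vs v ∧ es ≠ [] ∧ es.Nodup ∧ vs.Nodup

/-- `C` is the edge set of a cycle of the subgraph `G[I]`. -/
def IsCycleIn (G : Multigraph V E) (I : Set E) (C : Set E) : Prop :=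
  ∃ v es vs, G.IsCycle I v es vs ∧ C = {e | e ∈ es}

/-- A path from `u` to `w`: a walk with pairwise distinct vertices. -/
def IsPath (G : Multigraph V E) (I : Set E) (u : V) (es : List E) (vs : List V)
    (w : V) : Prop :=
  G.IsWalkFrom I u es vs w ∧ (u :: vs).Nodup

/-- The vertices covered by an edge set `D`; the vertex set of `G[D]`. -/
def verts (G : Multigraph V E) (D : Set E) : Set V := {v | ∃ e ∈ D, v ∈ G.inc e}

/-- The degree of `v` in the subgraph `G[D]` (loops count twice). -/
noncomputable def degree (G : Multigraph V E) (D : Set E) (v : V) : ℕ :=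
  {e ∈ D | v ∈ G.inc e}.ncard + {e ∈ D | G.inc e = s(v, v)}.ncard

/-- Every connected component of `G[I]` contains at most one cycle:
any two cycles of `G[I]` lying in the same component coincide. -/
def BicircIndep (G : Multigraph V E) (I : Set E) : Prop :=
  ∀ C₁ C₂ : Set E, G.IsCycleIn I C₁ → G.IsCycleIn I C₂ →
    (∃ u w, u ∈ G.verts C₁ ∧ w ∈ G.verts C₂ ∧ G.Reachable I u w) → C₁ = C₂

/-- `M` is the bicircular matroid `B(G)` of the multigraph `G`. -/
def IsBicircularOf (G : Multigraph V E) (M : Matroid E) : Prop :=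
  M.E = univ ∧ ∀ I : Set E, M.Indep I ↔ G.BicircIndep I

end Multigraph

/-! ### Matroid notions -/

variable {α : Type*}

/-- The (extended) rank of a set in a matroid. -/
noncomputable def eRk (M : Matroid α) (X : Set α) : ℕ∞ :=
  ⨆ I ∈ {I | M.Indep I ∧ I ⊆ X}, I.encard

/-- A circuit: a minimal dependent set. -/
def Circuit (M : Matroid α) (C : Set α) : Prop :=
  M.Dep C ∧ ∀ D ⊂ C, ¬ M.Dep D

/-- A double circuit: a finite set `D` with `r(D) = |D| - 2` whose rank does not drop
when any single element is removed. -/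
def DoubleCircuit (M : Matroid α) (D : Set α) : Prop :=
  D ⊆ M.E ∧ D.Finite ∧ eRk M D + 2 = D.encard ∧ ∀ d ∈ D, eRk M (D \ {d}) = eRk M D

/-- `f` is a circuit partition of `D`: a partition of `D` into nonempty parts such that the
circuits of `M` contained in `D` are exactly the complements in `D` of the parts. -/
def CircuitPartition (M : Matroid α) (D : Set α) {k : ℕ} (f : Fin k → Set α) : Prop :=
  (∀ i, (f i).Nonempty) ∧ (∀ i j : Fin k, i ≠ j → Disjoint (f i) (f j)) ∧
    (⋃ i, f i) = D ∧ ∀ C : Set α, (Circuit M C ∧ C ⊆ D) ↔ ∃ i, C = D \ f i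

/-- A part of a partition is singular if it has exactly one element. -/
def PositiveDoubleCircuit (M : Matroid α) (D : Set α) : Prop :=
  DoubleCircuit M D ∧ ∃ (k : ℕ) (f : Fin k → Set α), CircuitPartition M D f ∧
    {i : Fin k | (f i).encard ≠ 1}.ncard < {i : Fin k | (f i).encard = 1}.ncard

/-- A hyperplane (copoint): a maximal proper flat. -/
def Hyperplane (M : Matroid α) (H : Set α) : Prop :=
  M.IsFlat H ∧ H ≠ M.E ∧ ∀ F, M.IsFlat F → H ⊂ F → F = M.E

/-- A coline: a flat of rank `r(M) - 2`. -/
def Coline (M : Matroid α) (L : Set α) : Prop :=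
  M.IsFlat L ∧ eRk M L + 2 = eRk M M.E

/-- A positive coline: more simple copoints on `L` than multiple copoints on `L`. -/
def PositiveColine (M : Matroid α) (L : Set α) : Prop :=
  Coline M L ∧
    {H | Hyperplane M H ∧ L ⊆ H ∧ (H \ L).encard ≠ 1}.ncard <
      {H | Hyperplane M H ∧ L ⊆ H ∧ (H \ L).encard = 1}.ncard

/-- Deletion of a set of elements. -/
def delete (M : Matroid α) (D : Set α) : Matroid α := M.restrict (M.E \ D)

/-- Contraction of a set of elements. -/
def contract (M : Matroid α) (C : Set α) : Matroid α := (delete M✶ C)✶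

/-- `N` is a minor of `M`. -/
def IsMinorOf (N M : Matroid α) : Prop := ∃ C D : Set α, N = delete (contract M C) D

/-- `M` is (isomorphic to) the uniform matroid `U_{r,n}`. -/
def IsUniform (r n : ℕ) {β : Type*} (M : Matroid β) : Prop :=
  M.E.encard = n ∧ ∀ I ⊆ M.E, (M.Indep I ↔ I.encard ≤ (r : ℕ∞))

/-- A simple matroid: every set of at most two elements of the ground set is independent. -/
def IsSimple (M : Matroid α) : Prop := ∀ X ⊆ M.E, X.encard ≤ 2 → M.Indep X


/-!
The parts of a circuit partition of `D` are disjoint and the circuits inside `D` are the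
complements of the parts, so a subset of `D` is dependent exactly when it contains all parts but
one. Pick one element `d i` in each part, contract the rest `C₀ = D \ {d i}` and restrict to the
transversal `T = {d i}`: a set `I ⊆ T` is independent in `M ／ C₀` exactly when `I ∪ C₀` misses
two parts, i.e. when `|I| ≤ j - 2`. -/

theorem _root_.Set.forall_not_sdiff_singleton_subset_iff {β : Type*} {T I : Set β}
    (hT : T.Nonempty) : (∀ t ∈ T, ¬ T \ {t} ⊆ I) ↔ (T \ I).Nontrivial := by
  simp only [sdiff_subset_comm (u := I), subset_singleton_iff]
  refine ⟨fun h => ?_, ?_⟩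
  · obtain ⟨t₀, ht₀⟩ := hT
    push Not at h
    obtain ⟨a, ha, hat₀⟩ := h t₀ ht₀
    obtain ⟨b, hb, hba⟩ := h a ha.1
    exact ⟨a, ha, b, hb, hba.symm⟩
  · rintro ⟨a, ha, b, hb, hab⟩ t - h
    exact hab ((h a ha).trans (h b hb).symm)

theorem _root_.Set.nontrivial_sdiff_iff_encard_add_two_le {β : Type*} {T I : Set β}
    (hIT : I ⊆ T) (hI : I.Finite) : (T \ I).Nontrivial ↔ I.encard + 2 ≤ T.encard := by
  rw [← one_lt_encard_iff_nontrivial, ← encard_sdiff_add_encard_of_subset hIT, add_comm _ I.encard,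
    ENat.add_le_add_iff_left hI.encard_lt_top.ne, ← one_add_one_eq_two,
    ENat.add_one_le_iff ENat.one_ne_top]

theorem _root_.ENat.le_natCast_sub_iff {a : ℕ∞} {m n : ℕ} (h : n ≤ m) :
    a ≤ ((m - n : ℕ) : ℕ∞) ↔ a + n ≤ m := by
  obtain ⟨k, rfl⟩ := Nat.exists_eq_add_of_le' h
  rw [Nat.add_sub_cancel, Nat.cast_add, ENat.add_le_add_iff_right (ENat.natCast_ne_top n)]

open Matroid

theorem circuit_iff_isCircuit {M : Matroid α} {C : Set α} : Circuit M C ↔ M.IsCircuit C :=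
  minimal_iff_forall_ssubset.symm

theorem isMinorOf_restrict_contract (M : Matroid α) {C X : Set α} (hX : X ⊆ (M ／ C).E) :
    IsMinorOf ((M ／ C) ↾ X) M :=
  ⟨C, (M ／ C).E \ X, (delete_compl hX).symm⟩

theorem DoubleCircuit.nonempty {M : Matroid α} {D : Set α} (hD : DoubleCircuit M D) :
    D.Nonempty := by
  rw [nonempty_iff_ne_empty]
  rintro rfl
  have h := hD.2.2.1
  rw [encard_empty] at h
  exact absurd (add_eq_zero.1 h).2 two_ne_zero

namespace CircuitPartition

variable {M : Matroid α} {D : Set α} {k : ℕ} {f : Fin k → Set α}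

theorem isCircuit (hf : CircuitPartition M D f) (i : Fin k) : M.IsCircuit (D \ f i) :=
  circuit_iff_isCircuit.1 ((hf.2.2.2 _).2 ⟨i, rfl⟩).1

theorem subset (hf : CircuitPartition M D f) (i : Fin k) : f i ⊆ D :=
  hf.2.2.1 ▸ subset_iUnion f i

theorem indep_iff (hf : CircuitPartition M D f) (hDE : D ⊆ M.E) {X : Set α} (hXD : X ⊆ D) :
    M.Indep X ↔ ∀ i, ¬ D \ f i ⊆ X := by
  refine ⟨fun hX i hi => (hf.isCircuit i).not_indep (hX.subset hi), fun h => ?_⟩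
  by_contra hX
  obtain ⟨C, hCX, hC⟩ := ((not_indep_iff (hXD.trans hDE)).1 hX).exists_isCircuit_subset
  obtain ⟨i, rfl⟩ := (hf.2.2.2 C).1 ⟨circuit_iff_isCircuit.2 hC, hCX.trans hXD⟩
  exact h i hCX

theorem two_le (hf : CircuitPartition M D f) (hD : D.Nonempty) : 2 ≤ k := by
  obtain ⟨x, hx⟩ := hD
  rw [← hf.2.2.1, mem_iUnion] at hx
  obtain ⟨i, -⟩ := hx
  obtain ⟨y, hyD, hyi⟩ := (hf.isCircuit i).nonempty
  rw [← hf.2.2.1, mem_iUnion] at hyD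
  obtain ⟨i', hyi'⟩ := hyD
  have hne : i' ≠ i := by rintro rfl; exact hyi hyi'
  have := Fin.val_ne_of_ne hne
  omega

section Transversal

variable {d : Fin k → α}

theorem apply_mem_iff_eq (hf : CircuitPartition M D f) (hd : ∀ i, d i ∈ f i) {i i' : Fin k} :
    d i' ∈ f i ↔ i' = i :=
  ⟨fun h => by_contra fun hne => disjoint_left.1 (hf.2.1 i' i hne) (hd i') h, fun h => h ▸ hd i⟩

theorem injective (hf : CircuitPartition M D f) (hd : ∀ i, d i ∈ f i) : d.Injective :=
  fun _ i' h => (hf.apply_mem_iff_eq hd).1 (h ▸ hd i')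

theorem range_subset (hf : CircuitPartition M D f) (hd : ∀ i, d i ∈ f i) : range d ⊆ D :=
  range_subset_iff.2 fun i => hf.subset i (hd i)

theorem encard_range (hf : CircuitPartition M D f) (hd : ∀ i, d i ∈ f i) :
    (range d).encard = k := by
  rw [← image_univ, (hf.injective hd).encard_image, encard_univ, ENat.card_eq_coe_fintype_card,
    Fintype.card_fin]

theorem sdiff_subset_union_iff (hf : CircuitPartition M D f) (hd : ∀ i, d i ∈ f i)
    {I : Set α} (i : Fin k) :
    D \ f i ⊆ I ∪ (D \ range d) ↔ range d \ {d i} ⊆ I := by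
  constructor
  · rintro h _ ⟨⟨i', rfl⟩, hi'⟩
    have hi'f : d i' ∉ f i := fun h' => hi' (congrArg d ((hf.apply_mem_iff_eq hd).1 h'))
    exact (h ⟨hf.range_subset hd (mem_range_self i'), hi'f⟩).resolve_right
      fun h' => h'.2 (mem_range_self i')
  · rintro h x ⟨hxD, hxf⟩
    by_cases hx : x ∈ range d
    · obtain ⟨i', rfl⟩ := hx
      exact Or.inl (h ⟨mem_range_self i', fun h' => hxf (h' ▸ hd i)⟩)
    · exact Or.inr ⟨hxD, hx⟩

theorem indep_union_sdiff_range_iff (hf : CircuitPartition M D f) (hDE : D ⊆ M.E)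
    (hd : ∀ i, d i ∈ f i) (hk : 0 < k) {I : Set α} (hI : I ⊆ range d) :
    M.Indep (I ∪ (D \ range d)) ↔ I.encard + 2 ≤ k := by
  rw [hf.indep_iff hDE (union_subset (hI.trans (hf.range_subset hd)) sdiff_subset)]
  simp_rw [hf.sdiff_subset_union_iff hd]
  rw [← forall_mem_range (p := fun t => ¬ range d \ {t} ⊆ I),
    forall_not_sdiff_singleton_subset_iff ⟨d ⟨0, hk⟩, mem_range_self _⟩,
    nontrivial_sdiff_iff_encard_add_two_le hI ((finite_range d).subset hI), hf.encard_range hd]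

end Transversal

end CircuitPartition

/-- A double circuit of degree `j` (circuit partition with `j` parts)
yields a minor isomorphic to the uniform matroid `U_{j-2,j}`. -/
theorem doubleCircuit_uniform_minor {α : Type*} (M : Matroid α) (D : Set α) {j : ℕ}
    (f : Fin j → Set α) (hD : DoubleCircuit M D) (hf : CircuitPartition M D f) :
    ∃ N : Matroid α, IsMinorOf N M ∧ IsUniform (j - 2) j N := by
  have hj : 2 ≤ j := hf.two_le hD.nonempty
  choose d hd using hf.1
  set T := range d
  have hindep {I : Set α} (hI : I ⊆ T) : M.Indep (I ∪ (D \ T)) ↔ I.encard + 2 ≤ j :=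
    hf.indep_union_sdiff_range_iff hD.1 hd (by omega) hI
  have hC₀ : M.Indep (D \ T) := by
    simpa using (hindep (empty_subset T)).2 (by rw [encard_empty, zero_add]; exact_mod_cast hj)
  have hTE : T ⊆ (M ／ (D \ T)).E :=
    subset_sdiff.2 ⟨(hf.range_subset hd).trans hD.1, disjoint_sdiff_right⟩
  refine ⟨(M ／ (D \ T)) ↾ T, isMinorOf_restrict_contract M hTE, ?_, fun I hI => ?_⟩
  · exact hf.encard_range hd
  · have hIT : I ⊆ T := hI
    rw [restrict_indep_iff, hC₀.contract_indep_iff, ENat.le_natCast_sub_iff hj, Nat.cast_ofNat,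
      ← hindep hIT]
    exact ⟨fun h => h.1.2, fun h => ⟨⟨disjoint_sdiff_right.mono_left hIT, h⟩, hIT⟩⟩

end Paper
end

section
/- The circuits of the bicircular matroid B(G) are exactly the edge sets of subgraphs of G that are subdivisions of one of the following graphs: two loops at the same vertex, two loops joined by an edge (a dumbbell), or three parallel edges between two vertices (a theta graph). -/
/-!
Call the three kinds of subgraph in the statement bicycles. A set is dependent in `B(G)` exactly
when it contains two distinct cycles in one component, and two such cycles yield a bicycle: if
they are vertex-disjoint, a path joining them that meets them only at its ends gives a dumbbell;
otherwise a segment of one cycle that meets the other only at its ends gives a theta, or, if there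
is no such segment, the two cycles form a figure eight. So every circuit is a bicycle.

Conversely, every bicycle is a cycle, or two disjoint cycles, with an ear attached, which makes it
*tight*: finite, connected, of minimum degree two, with one more edge than vertices. Summing
degrees shows that no tight set properly contains another; as bicycles are dependent, each one is
a circuit.
-/

open Set

namespace Paper

/-! ### Matroid notions -/

variable {α : Type*}

namespace Multigraph

variable {V E : Type*}

/-- `D` is the edge set of a subdivision of two loops at the same vertex:
two edge-disjoint cycles sharing exactly one vertex. -/
def IsFigureEight (G : Multigraph V E) (D : Set E) : Prop :=
  ∃ C₁ C₂ : Set E, G.IsCycleIn D C₁ ∧ G.IsCycleIn D C₂ ∧ Disjoint C₁ C₂ ∧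
    (∃ w, G.verts C₁ ∩ G.verts C₂ = {w}) ∧ D = C₁ ∪ C₂

/-- `D` is the edge set of a subdivision of two loops joined by an edge (a dumbbell):
two vertex-disjoint cycles joined by a nontrivial path that is internally disjoint
from both. -/
def IsDumbbell (G : Multigraph V E) (D : Set E) : Prop :=
  ∃ (C₁ C₂ : Set E) (u w : V) (es : List E) (vs : List V),
    G.IsCycleIn D C₁ ∧ G.IsCycleIn D C₂ ∧ Disjoint (G.verts C₁) (G.verts C₂) ∧
    G.IsPath D u es vs w ∧ es ≠ [] ∧ u ∈ G.verts C₁ ∧ w ∈ G.verts C₂ ∧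
    (∀ x ∈ vs.dropLast, x ∉ G.verts C₁ ∪ G.verts C₂) ∧
    (∀ e ∈ es, e ∉ C₁ ∪ C₂) ∧ D = C₁ ∪ C₂ ∪ {e | e ∈ es}

/-- `D` is the edge set of a subdivision of three parallel edges (a theta graph):
three pairwise internally disjoint paths between two distinct vertices. -/
def IsTheta (G : Multigraph V E) (D : Set E) : Prop :=
  ∃ (u w : V) (es₁ es₂ es₃ : List E) (vs₁ vs₂ vs₃ : List V),
    u ≠ w ∧ G.IsPath D u es₁ vs₁ w ∧ G.IsPath D u es₂ vs₂ w ∧ G.IsPath D u es₃ vs₃ w ∧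
    (∀ e, ¬ (e ∈ es₁ ∧ e ∈ es₂)) ∧ (∀ e, ¬ (e ∈ es₁ ∧ e ∈ es₃)) ∧
    (∀ e, ¬ (e ∈ es₂ ∧ e ∈ es₃)) ∧
    (∀ x, ¬ (x ∈ vs₁.dropLast ∧ x ∈ vs₂.dropLast)) ∧
    (∀ x, ¬ (x ∈ vs₁.dropLast ∧ x ∈ vs₃.dropLast)) ∧
    (∀ x, ¬ (x ∈ vs₂.dropLast ∧ x ∈ vs₃.dropLast)) ∧
    D = {e | e ∈ es₁ ∨ e ∈ es₂ ∨ e ∈ es₃}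

end Multigraph

namespace Multigraph

variable {V E : Type*} {G : Multigraph V E} {M : Matroid E} {I J X S C Z Z₁ Z₂ : Set E}
  {A B : Set V} {u v w x y z a b : V} {e f g : E} {es es₁ es₂ : List E} {vs vs₁ vs₂ : List V}

/-! ### Walks and paths -/

theorem getLast_cons_append_of_getLast_eq (h : (u :: vs₁).getLast (by simp) = x) :
    (u :: (vs₁ ++ vs₂)).getLast (by simp) = (x :: vs₂).getLast (by simp) := by
  induction vs₁ generalizing u with
  | nil => simp_all
  | cons a l ih =>
    exact (List.getLast_cons (by simp)).trans (ih ((List.getLast_cons _).symm.trans h))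

theorem getLast_not_mem_dropLast {α : Type*} {l : List α} (hl : l ≠ []) (hnd : l.Nodup) :
    l.getLast hl ∉ l.dropLast :=
  fun h => (List.nodup_append'.1 (List.dropLast_concat_getLast hl ▸ hnd)).2.2 h (by simp)

theorem ncard_setOf_mem_of_nodup {α : Type*} {l : List α} (h : l.Nodup) :
    {x | x ∈ l}.ncard = l.length := by
  classical
  rw [← List.coe_toFinset, ncard_coe_finset, List.toFinset_card_of_nodup h]

theorem IsWalk.length_eq (h : G.IsWalk I u es vs) : vs.length = es.length := by
  induction h <;> simp [*]

theorem IsWalk.eq_nil_iff (h : G.IsWalk I u es vs) : es = [] ↔ vs = [] := by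
  rw [← List.length_eq_zero_iff, ← h.length_eq, List.length_eq_zero_iff]

theorem IsWalk.mem_of_mem (h : G.IsWalk I u es vs) (he : e ∈ es) : e ∈ I := by
  induction h with
  | nil => simp at he
  | cons hI _ _ ih => exact (List.mem_cons.1 he).elim (· ▸ hI) ih

theorem IsWalk.mono (h : G.IsWalk I u es vs) (hJ : ∀ e ∈ es, e ∈ J) : G.IsWalk J u es vs := by
  induction h with
  | nil v => exact .nil v
  | cons _ hinc _ ih =>
    exact .cons (hJ _ List.mem_cons_self) hinc (ih fun e he => hJ e (by simp [he]))

theorem IsWalk.append (h₁ : G.IsWalk I u es₁ vs₁)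
    (h₂ : G.IsWalk I ((u :: vs₁).getLast (by simp)) es₂ vs₂) :
    G.IsWalk I u (es₁ ++ es₂) (vs₁ ++ vs₂) := by
  induction h₁ with
  | nil => simpa using h₂
  | cons hI hinc _ ih => exact .cons hI hinc (ih (by rwa [List.getLast_cons (by simp)] at h₂))

theorem IsWalkFrom.append (h₁ : G.IsWalkFrom I u es₁ vs₁ v) (h₂ : G.IsWalkFrom I v es₂ vs₂ w) :
    G.IsWalkFrom I u (es₁ ++ es₂) (vs₁ ++ vs₂) w :=
  ⟨h₁.1.append (h₁.2 ▸ h₂.1), (getLast_cons_append_of_getLast_eq h₁.2).trans h₂.2⟩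

theorem IsWalkFrom.reverse (h : G.IsWalkFrom I u es vs w) :
    G.IsWalkFrom I w es.reverse ((u :: vs).dropLast.reverse) u := by
  obtain ⟨h, rfl⟩ := h
  induction h with
  | nil v => exact ⟨.nil v, rfl⟩
  | @cons a b e es vs hI hinc _ ih =>
    have hstep : G.IsWalkFrom I b [e] [a] a := ⟨.cons hI (hinc.trans Sym2.eq_swap) (.nil a), rfl⟩
    simpa [List.getLast_cons] using ih.append hstep

theorem IsWalkFrom.getLast_eq (h : G.IsWalkFrom I u es vs w) (hvs : vs ≠ []) :
    vs.getLast hvs = w :=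
  (List.getLast_cons hvs).symm.trans h.2

theorem IsWalkFrom.eq_of_nil (h : G.IsWalkFrom I u [] vs w) : u = w := by
  obtain ⟨h, rfl⟩ := h
  cases h; rfl

theorem IsWalkFrom.mem_of_ne_nil (h : G.IsWalkFrom I u es vs w) (hes : es ≠ []) : w ∈ vs := by
  have hvs : vs ≠ [] := mt h.1.eq_nil_iff.2 hes
  exact h.getLast_eq hvs ▸ List.getLast_mem hvs

theorem IsWalkFrom.ne_nil (h : G.IsWalkFrom I u es vs w) (huw : u ≠ w) : es ≠ [] := by
  rintro rfl
  exact huw h.eq_of_nil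

theorem IsWalk.exists_inc_eq (h : G.IsWalk I u es vs) (he : e ∈ es) :
    ∃ p q, G.inc e = s(p, q) ∧ p ∈ u :: vs ∧ q ∈ vs := by
  induction h with
  | nil => simp at he
  | @cons a b e' es vs _ hinc _ ih =>
    rcases List.mem_cons.1 he with rfl | he
    · exact ⟨a, b, hinc, by simp, by simp⟩
    · obtain ⟨p, q, h, hp, hq⟩ := ih he
      exact ⟨p, q, h, List.mem_cons_of_mem _ hp, List.mem_cons_of_mem _ hq⟩

theorem IsWalk.inc_head (h : G.IsWalk I u (e :: es) vs) : u ∈ G.inc e := by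
  cases h with
  | cons _ hinc _ => simp [hinc]

theorem IsWalkFrom.inc_getLast (h : G.IsWalkFrom I u (es ++ [e]) vs w) : w ∈ G.inc e := by
  have h' := h.reverse.1
  rw [List.reverse_append, List.reverse_singleton, List.singleton_append] at h'
  exact h'.inc_head

theorem IsWalkFrom.split (h : G.IsWalkFrom I u es vs w) (hx : x ∈ vs) :
    ∃ es₁ es₂ vs₁ vs₂, es = es₁ ++ es₂ ∧ vs = vs₁ ++ vs₂ ∧ es₁ ≠ [] ∧
      G.IsWalkFrom I u es₁ vs₁ x ∧ G.IsWalkFrom I x es₂ vs₂ w := by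
  obtain ⟨h, rfl⟩ := h
  induction h with
  | nil => simp at hx
  | @cons a b e es vs hI hinc hw ih =>
    rcases List.mem_cons.1 hx with rfl | hx
    · exact ⟨[e], es, [x], vs, rfl, rfl, by simp, ⟨.cons hI hinc (.nil x), rfl⟩,
        ⟨hw, (List.getLast_cons _).symm⟩⟩
    · obtain ⟨es₁, es₂, vs₁, vs₂, rfl, rfl, -, h₁, h₂⟩ := ih hx
      refine ⟨e :: es₁, es₂, b :: vs₁, vs₂, rfl, rfl, by simp,
        ⟨.cons hI hinc h₁.1, (List.getLast_cons _).trans h₁.2⟩,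
        ⟨h₂.1, h₂.2.trans (List.getLast_cons _).symm⟩⟩

theorem IsWalkFrom.split_edge (h : G.IsWalkFrom I u es vs w) (hes : es = es₁ ++ e :: es₂) :
    ∃ vs₁ vs₂ p q, vs = vs₁ ++ q :: vs₂ ∧ G.IsWalkFrom I u es₁ vs₁ p ∧ G.inc e = s(p, q) ∧
      G.IsWalkFrom I q es₂ vs₂ w := by
  subst hes
  obtain ⟨h, rfl⟩ := h
  induction es₁ generalizing u vs with
  | nil =>
    cases h with
    | @cons _ q _ _ vs₂ _ hinc hw => exact ⟨[], vs₂, u, q, rfl, ⟨.nil u, rfl⟩, hinc, hw, rfl⟩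
  | cons f es₁ ih =>
    cases h with
    | @cons _ b _ _ vs hI hinc hw =>
      obtain ⟨vs₁, vs₂, p, q, rfl, h₁, hpq, h₂⟩ := ih hw
      exact ⟨b :: vs₁, vs₂, p, q, rfl, ⟨.cons hI hinc h₁.1, (List.getLast_cons _).trans h₁.2⟩,
        hpq, h₂.1, h₂.2.trans (List.getLast_cons _).symm⟩

theorem verts_mono (h : S ⊆ X) : G.verts S ⊆ G.verts X :=
  fun _ ⟨e, he, hv⟩ => ⟨e, h he, hv⟩

theorem verts_union : G.verts (S ∪ X) = G.verts S ∪ G.verts X := by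
  ext v
  simp only [verts, mem_union, mem_ofPred_eq, or_and_right, exists_or]

theorem verts_finite (hX : X.Finite) : (G.verts X).Finite := by
  refine (hX.biUnion (t := fun e => {v | v ∈ G.inc e}) fun e _ => ?_).subset ?_
  · induction G.inc e using Sym2.ind with
    | h p q => exact ((finite_singleton q).insert p).subset fun v hv => by simpa using hv
  · rintro v ⟨e, he, hv⟩
    exact mem_biUnion he hv

theorem disjoint_of_disjoint_verts (h : Disjoint (G.verts S) (G.verts X)) : Disjoint S X := by
  refine disjoint_left.2 fun e heS heX => ?_
  induction h' : G.inc e using Sym2.ind with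
  | h p q =>
    exact disjoint_left.1 h ⟨e, heS, h' ▸ Sym2.mem_mk_left p q⟩ ⟨e, heX, h' ▸ Sym2.mem_mk_left p q⟩

theorem IsWalk.verts_eq (h : G.IsWalk I u es vs) (hes : es ≠ []) :
    G.verts {e | e ∈ es} = {y | y ∈ u :: vs} := by
  refine Subset.antisymm ?_ ?_
  · rintro y ⟨e, he, hy⟩
    obtain ⟨p, q, hpq, hp, hq⟩ := h.exists_inc_eq he
    rw [hpq, Sym2.mem_iff] at hy
    rcases hy with rfl | rfl
    exacts [hp, List.mem_cons_of_mem _ hq]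
  · induction h with
    | nil => exact absurd rfl hes
    | @cons a b e es vs _ hinc hw ih =>
      intro y hy
      rcases List.mem_cons.1 hy with rfl | hy
      · exact ⟨e, List.mem_cons_self, by simp [hinc]⟩
      rcases List.mem_cons.1 hy with rfl | hy
      · exact ⟨e, List.mem_cons_self, by simp [hinc]⟩
      have hes : es ≠ [] := by rintro rfl; cases hw; simp at hy
      exact verts_mono (fun f hf => List.mem_cons_of_mem _ hf) (ih hes (List.mem_cons_of_mem _ hy))

protected theorem Reachable.refl (G : Multigraph V E) (I : Set E) (u : V) : G.Reachable I u u :=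
  ⟨[], [], .nil u, rfl⟩

protected theorem Reachable.symm (h : G.Reachable I u w) : G.Reachable I w u :=
  let ⟨_, _, h⟩ := h; ⟨_, _, h.reverse⟩

protected theorem Reachable.trans (h₁ : G.Reachable I u v) (h₂ : G.Reachable I v w) :
    G.Reachable I u w :=
  let ⟨_, _, h₁⟩ := h₁; let ⟨_, _, h₂⟩ := h₂; ⟨_, _, h₁.append h₂⟩

theorem Reachable.mono (h : G.Reachable I u w) (hIJ : I ⊆ J) : G.Reachable J u w :=
  let ⟨es, vs, h, hw⟩ := h; ⟨es, vs, h.mono fun _ he => hIJ (h.mem_of_mem he), hw⟩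

theorem IsWalk.reachable_of_mem (h : G.IsWalk I u es vs) (hy : y ∈ u :: vs) :
    G.Reachable {e | e ∈ es} u y := by
  rcases List.mem_cons.1 hy with rfl | hy
  · exact .refl G _ y
  · obtain ⟨es₁, es₂, vs₁, vs₂, rfl, -, -, h₁, -⟩ := IsWalkFrom.split ⟨h, rfl⟩ hy
    exact ⟨es₁, vs₁, h₁.1.mono fun e he => List.mem_append_left _ he, h₁.2⟩

theorem IsPath.mono (h : G.IsPath I u es vs w) (hJ : ∀ e ∈ es, e ∈ J) : G.IsPath J u es vs w :=
  ⟨⟨h.1.1.mono hJ, h.1.2⟩, h.2⟩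

theorem IsWalk.nodup_of_nodup (h : G.IsWalk I u es vs) (hnd : (u :: vs).Nodup) : es.Nodup := by
  induction h with
  | nil => simp
  | @cons a b e es vs _ hinc hw ih =>
    refine List.nodup_cons.2 ⟨fun he => ?_, ih hnd.of_cons⟩
    obtain ⟨p, q, hpq, hp, hq⟩ := hw.exists_inc_eq he
    have ha : a ∉ b :: vs := (List.nodup_cons.1 hnd).1
    rcases Sym2.eq_iff.1 (hinc.symm.trans hpq) with ⟨rfl, -⟩ | ⟨rfl, -⟩
    exacts [ha hp, ha (List.mem_cons_of_mem _ hq)]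

theorem IsPath.nodup_edges (h : G.IsPath I u es vs w) : es.Nodup :=
  h.1.1.nodup_of_nodup h.2

theorem IsWalkFrom.exists_isPath (h : G.IsWalkFrom I u es vs w) :
    ∃ es' vs', G.IsPath I u es' vs' w ∧ (∀ e ∈ es', e ∈ es) ∧ ∀ y ∈ vs', y ∈ vs := by
  induction hn : es.length using Nat.strong_induction_on generalizing u es vs with
  | _ n ih =>
    subst hn
    by_cases hu : u ∈ vs
    · obtain ⟨es₁, es₂, vs₁, vs₂, rfl, rfl, hes₁, -, h₂⟩ := h.split hu
      obtain ⟨es', vs', hp, hes', hvs'⟩ :=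
        ih _ (by simp [List.length_pos_iff.2 hes₁]) h₂ rfl
      exact ⟨es', vs', hp, fun e he => by simp [hes' e he], fun y hy => by simp [hvs' y hy]⟩
    · obtain ⟨hw, rfl⟩ := h
      cases hw with
      | nil => exact ⟨[], [], ⟨⟨.nil u, rfl⟩, by simp⟩, by simp, by simp⟩
      | @cons _ b e es vs hI hinc hw =>
        obtain ⟨es', vs', hp, hes', hvs'⟩ := ih _ (by simp) ⟨hw, rfl⟩ rfl
        refine ⟨e :: es', b :: vs', ⟨⟨.cons hI hinc hp.1.1, ?_⟩, ?_⟩, ?_, ?_⟩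
        · exact (List.getLast_cons _).trans hp.1.2
        · refine List.nodup_cons.2 ⟨?_, hp.2⟩
          rintro (_ | ⟨_, hy⟩)
          exacts [hu List.mem_cons_self, hu (List.mem_cons_of_mem _ (hvs' _ hy))]
        · simpa using fun f hf => Or.inr (hes' f hf)
        · simpa using fun y hy => Or.inr (hvs' y hy)

theorem IsPath.split (h : G.IsPath I a es vs b) (hx : x ∈ vs.dropLast) :
    ∃ es₁ es₂ vs₁ vs₂, es = es₁ ++ es₂ ∧ es₁ ≠ [] ∧ es₂ ≠ [] ∧
      G.IsPath I a es₁ vs₁ x ∧ G.IsPath I x es₂ vs₂ b := by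
  obtain ⟨es₁, es₂, vs₁, vs₂, rfl, rfl, hes₁, h₁, h₂⟩ :=
    h.1.split (List.dropLast_subset _ hx)
  have hnd := h.2
  have hvs₁ : vs₁ ≠ [] := mt h₁.1.eq_nil_iff.2 hes₁
  have hx₁ : x ∈ vs₁ := h₁.getLast_eq hvs₁ ▸ List.getLast_mem hvs₁
  have hvs₂ : vs₂ ≠ [] := by
    rintro rfl
    rw [List.append_nil] at hx hnd
    exact getLast_not_mem_dropLast hvs₁ hnd.of_cons (h₁.getLast_eq hvs₁ ▸ hx)
  refine ⟨es₁, es₂, vs₁, vs₂, rfl, hes₁, mt h₂.1.eq_nil_iff.1 hvs₂,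
    ⟨h₁, hnd.sublist (by simp)⟩, ⟨h₂, ?_⟩⟩
  rw [← List.cons_append] at hnd
  exact List.nodup_cons.2 ⟨fun hx₂ => List.disjoint_of_nodup_append hnd (by simp [hx₁]) hx₂,
    hnd.of_append_right⟩

theorem IsWalkFrom.exists_inc_eq (h : G.IsWalkFrom I u es vs w) (he : e ∈ es) :
    ∃ p q, G.inc e = s(p, q) ∧ (p = u ∨ p ∈ vs.dropLast) ∧ (q = w ∨ q ∈ vs.dropLast) ∧
      (es = [e] ∨ p ∈ vs.dropLast ∨ q ∈ vs.dropLast) := by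
  obtain ⟨es₁, es₂, rfl⟩ := List.append_of_mem he
  obtain ⟨vs₁, vs₂, p, q, rfl, h₁, hpq, h₂⟩ := h.split_edge rfl
  have hp : es₁ ≠ [] → p ∈ (vs₁ ++ q :: vs₂).dropLast := fun hes₁ => by
    rw [List.dropLast_append_cons]
    exact List.mem_append_left _ (h₁.mem_of_ne_nil hes₁)
  have hq : es₂ ≠ [] → q ∈ (vs₁ ++ q :: vs₂).dropLast := fun hes₂ => by
    rw [List.dropLast_append_cons, List.dropLast_cons_of_ne_nil (mt h₂.1.eq_nil_iff.2 hes₂)]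
    simp
  refine ⟨p, q, hpq, ?_, ?_, ?_⟩
  · rcases eq_or_ne es₁ [] with rfl | hes₁
    exacts [Or.inl h₁.eq_of_nil.symm, Or.inr (hp hes₁)]
  · rcases eq_or_ne es₂ [] with rfl | hes₂
    exacts [Or.inl h₂.eq_of_nil, Or.inr (hq hes₂)]
  · rcases eq_or_ne es₁ [] with rfl | hes₁
    · rcases eq_or_ne es₂ [] with rfl | hes₂
      exacts [Or.inl rfl, Or.inr (Or.inr (hq hes₂))]
    · exact Or.inr (Or.inl (hp hes₁))

theorem IsWalkFrom.cons_dropLast_reverse (h : G.IsWalkFrom I u es vs w) :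
    w :: (u :: vs).dropLast.reverse = (u :: vs).reverse := by
  conv_rhs => rw [← List.dropLast_concat_getLast (List.cons_ne_nil u vs), h.2]
  simp

theorem IsPath.reverse (h : G.IsPath I u es vs w) :
    G.IsPath I w es.reverse ((u :: vs).dropLast.reverse) u :=
  ⟨h.1.reverse, by rw [h.1.cons_dropLast_reverse, List.nodup_reverse]; exact h.2⟩

theorem IsPath.ne_of_ne_nil (h : G.IsPath I u es vs w) (hes : es ≠ []) : u ≠ w := by
  rintro rfl
  exact (List.nodup_cons.1 h.2).1 (h.1.mem_of_ne_nil hes)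

/-! ### Cycles -/

theorem IsCycle.vs_ne_nil (h : G.IsCycle I v es vs) : vs ≠ [] :=
  mt h.1.1.eq_nil_iff.2 h.2.1

theorem IsCycle.mem (h : G.IsCycle I v es vs) : v ∈ vs :=
  h.1.mem_of_ne_nil h.2.1

theorem IsCycle.verts_eq (h : G.IsCycle I v es vs) : G.verts {e | e ∈ es} = {y | y ∈ vs} := by
  rw [h.1.1.verts_eq h.2.1]
  ext y
  simpa using fun hy => hy ▸ h.mem

theorem IsCycle.eq_singleton_of_loop (h : G.IsCycle I v es vs) (he : e ∈ es)
    (hloop : G.inc e = s(x, x)) : es = [e] := by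
  obtain ⟨es₁, es₂, rfl⟩ := List.append_of_mem he
  obtain ⟨vs₁, vs₂, p, q, rfl, h₁, hpq, h₂⟩ := h.1.split_edge rfl
  obtain ⟨rfl, rfl⟩ : x = p ∧ x = q := by
    rcases Sym2.eq_iff.1 (hloop.symm.trans hpq) with h | ⟨h₁, h₂⟩
    exacts [h, ⟨h₂, h₁⟩]
  have hnd := List.nodup_append'.1 h.2.2.2
  rcases eq_or_ne es₁ [] with rfl | hes₁
  · obtain rfl := h₁.eq_of_nil
    rcases eq_or_ne es₂ [] with rfl | hes₂
    · rfl
    · exact absurd (h₂.mem_of_ne_nil hes₂) (List.nodup_cons.1 hnd.2.1).1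
  · exact absurd List.mem_cons_self (hnd.2.2 (h₁.mem_of_ne_nil hes₁))

theorem IsCycle.rotate (h : G.IsCycle I v es vs) (hx : x ∈ vs) :
    ∃ es' vs', G.IsCycle I x es' vs' ∧ es'.Perm es ∧ vs'.Perm vs := by
  obtain ⟨es₁, es₂, vs₁, vs₂, rfl, rfl, hes₁, h₁, h₂⟩ := h.1.split hx
  exact ⟨es₂ ++ es₁, vs₂ ++ vs₁, ⟨h₂.append h₁, by simp [hes₁],
    List.perm_append_comm.nodup_iff.1 h.2.2.1, List.perm_append_comm.nodup_iff.1 h.2.2.2⟩,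
    List.perm_append_comm, List.perm_append_comm⟩

theorem IsCycle.exists_isPath_isPath (h : G.IsCycle I a es vs) (hb : b ∈ vs) (hab : a ≠ b) :
    ∃ esP vsP esQ vsQ, G.IsPath I a esP vsP b ∧ G.IsPath I a esQ vsQ b ∧
      (∀ e, e ∈ es ↔ e ∈ esP ∨ e ∈ esQ) ∧ (∀ e, ¬ (e ∈ esP ∧ e ∈ esQ)) ∧
      (∀ x, ¬ (x ∈ vsP.dropLast ∧ x ∈ vsQ.dropLast)) ∧
      (∀ x ∈ vsP, x ∈ vs) ∧ (∀ x ∈ vsQ, x ∈ vs) := by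
  obtain ⟨es₁, es₂, vs₁, vs₂, rfl, rfl, hes₁, h₁, h₂⟩ := h.1.split hb
  have hes₂ : es₂ ≠ [] := h₂.ne_nil hab.symm
  have hvs₂ : vs₂ ≠ [] := mt h₂.1.eq_nil_iff.2 hes₂
  obtain ⟨hnd₁, hnd₂, hdisj⟩ := List.nodup_append'.1 h.2.2.2
  have hb₁ : b ∈ vs₁ := h₁.mem_of_ne_nil hes₁
  have hP : G.IsPath I a es₁ vs₁ b :=
    ⟨h₁, List.nodup_cons.2 ⟨fun ha => hdisj ha (h₂.mem_of_ne_nil hes₂), hnd₁⟩⟩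
  have hQ : G.IsPath I a es₂.reverse ((b :: vs₂).dropLast.reverse) b :=
    IsPath.reverse ⟨h₂, List.nodup_cons.2 ⟨fun hb₂ => hdisj hb₁ hb₂, hnd₂⟩⟩
  have hvsQ : (b :: vs₂).dropLast.reverse = vs₂.dropLast.reverse ++ [b] := by
    rw [List.dropLast_cons_of_ne_nil hvs₂, List.reverse_cons]
  refine ⟨es₁, vs₁, _, _, hP, hQ, by simp, fun e ⟨he₁, he₂⟩ => ?_, fun x ⟨hx₁, hx₂⟩ => ?_,
    fun x hx => List.mem_append_left _ hx, fun x hx => ?_⟩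
  · exact List.disjoint_of_nodup_append h.2.2.1 he₁ (List.mem_reverse.1 he₂)
  · rw [hvsQ, List.dropLast_concat, List.mem_reverse] at hx₂
    exact hdisj (List.dropLast_subset _ hx₁) (List.dropLast_subset _ hx₂)
  · rw [hvsQ] at hx
    simp only [List.mem_append, List.mem_reverse, List.mem_singleton] at hx
    rcases hx with hx | rfl
    exacts [List.mem_append_right _ (List.dropLast_subset _ hx), List.mem_append_left _ hb₁]

theorem IsPath.isCycle_append_reverse (h₁ : G.IsPath I u es₁ vs₁ w) (h₂ : G.IsPath I u es₂ vs₂ w)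
    (huw : u ≠ w) (he : ∀ e, ¬ (e ∈ es₁ ∧ e ∈ es₂))
    (hv : ∀ x, ¬ (x ∈ vs₁.dropLast ∧ x ∈ vs₂.dropLast)) :
    G.IsCycle I u (es₁ ++ es₂.reverse) (vs₁ ++ (u :: vs₂).dropLast.reverse) := by
  have hvs₂ : vs₂ ≠ [] := mt h₂.1.1.eq_nil_iff.2 (h₂.1.ne_nil huw)
  have hnd₁ := h₁.2
  have hnd₂ := h₂.2
  have hw₁ := h₁.1.getLast_eq (mt h₁.1.1.eq_nil_iff.2 (h₁.1.ne_nil huw))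
  have hw₂ := h₂.1.getLast_eq hvs₂
  refine ⟨h₁.1.append h₂.1.reverse, by simp [h₁.1.ne_nil huw], ?_, ?_⟩
  · exact List.nodup_append'.2 ⟨h₁.nodup_edges, List.nodup_reverse.2 h₂.nodup_edges,
      fun e he₁ he₂ => he e ⟨he₁, List.mem_reverse.1 he₂⟩⟩
  · rw [List.dropLast_cons_of_ne_nil hvs₂]
    refine List.nodup_append'.2 ⟨hnd₁.of_cons, ?_, fun x hx₁ hx₂ => ?_⟩
    · rw [List.nodup_reverse]
      exact hnd₂.sublist (List.Sublist.cons_cons _ (List.dropLast_sublist _))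
    · simp only [List.mem_reverse, List.mem_cons] at hx₂
      rcases hx₂ with rfl | hx₂
      · exact (List.nodup_cons.1 hnd₁).1 hx₁
      · by_cases hxw : x = w
        · subst hxw
          exact getLast_not_mem_dropLast hvs₂ hnd₂.of_cons (hw₂ ▸ hx₂)
        · exact hv x ⟨List.mem_dropLast_of_mem_of_ne_getLast hx₁ (hw₁ ▸ hxw), hx₂⟩

theorem IsCycleIn.exists_isCycle (h : G.IsCycleIn I C) (hx : x ∈ G.verts C) :
    ∃ es vs, G.IsCycle I x es vs ∧ C = {e | e ∈ es} := by
  obtain ⟨v, es, vs, hc, rfl⟩ := h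
  obtain ⟨es', vs', hc', hes, -⟩ := hc.rotate (by simpa [hc.verts_eq] using hx)
  exact ⟨es', vs', hc', by simp [hes.mem_iff]⟩

theorem IsCycleIn.nonempty (h : G.IsCycleIn I C) : C.Nonempty := by
  obtain ⟨v, es, vs, hc, rfl⟩ := h
  exact List.exists_mem_of_ne_nil _ hc.2.1

theorem IsCycleIn.subset (h : G.IsCycleIn I C) : C ⊆ I := by
  obtain ⟨v, es, vs, hc, rfl⟩ := h
  exact fun _ => hc.1.1.mem_of_mem

theorem IsCycleIn.mono (h : G.IsCycleIn I C) (hCJ : C ⊆ J) : G.IsCycleIn J C := by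
  obtain ⟨v, es, vs, hc, rfl⟩ := h
  exact ⟨v, es, vs, ⟨⟨hc.1.1.mono fun _ he => hCJ he, hc.1.2⟩, hc.2⟩, rfl⟩

theorem IsCycleIn.finite (h : G.IsCycleIn I C) : C.Finite := by
  obtain ⟨v, es, vs, hc, rfl⟩ := h
  exact es.finite_toSet

theorem IsCycleIn.ncard_eq (h : G.IsCycleIn I C) : C.ncard = (G.verts C).ncard := by
  obtain ⟨v, es, vs, hc, rfl⟩ := h
  rw [hc.verts_eq, ncard_setOf_mem_of_nodup hc.2.2.1, ncard_setOf_mem_of_nodup hc.2.2.2,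
    hc.1.1.length_eq]

theorem IsCycleIn.reachable (h : G.IsCycleIn I C) (ha : a ∈ G.verts C) (hb : b ∈ G.verts C) :
    G.Reachable C a b := by
  obtain ⟨es, vs, hc, rfl⟩ := h.exists_isCycle ha
  rw [hc.verts_eq] at hb
  exact hc.1.1.reachable_of_mem (List.mem_cons_of_mem _ hb)

/-! ### Bicycles are dependent -/

def HasLinkedCycles (G : Multigraph V E) (I : Set E) : Prop :=
  ∃ C₁ C₂ : Set E, G.IsCycleIn I C₁ ∧ G.IsCycleIn I C₂ ∧ C₁ ≠ C₂ ∧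
    ∃ a b, a ∈ G.verts C₁ ∧ b ∈ G.verts C₂ ∧ G.Reachable I a b

theorem not_bicircIndep_iff : ¬ G.BicircIndep I ↔ G.HasLinkedCycles I := by
  simp only [BicircIndep, HasLinkedCycles, not_forall, exists_prop]
  exact exists₂_congr fun C₁ C₂ => by tauto

theorem IsBicircularOf.dep_iff (hM : G.IsBicircularOf M) : M.Dep X ↔ G.HasLinkedCycles X := by
  rw [Matroid.dep_iff, hM.2, not_bicircIndep_iff, hM.1]
  exact and_iff_left (subset_univ X)

def IsBicycle (G : Multigraph V E) (D : Set E) : Prop :=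
  G.IsFigureEight D ∨ G.IsDumbbell D ∨ G.IsTheta D

theorem IsFigureEight.hasLinkedCycles (h : G.IsFigureEight S) : G.HasLinkedCycles S := by
  obtain ⟨C₁, C₂, h₁, h₂, hdisj, ⟨w, hw⟩, rfl⟩ := h
  have hw' : w ∈ G.verts C₁ ∩ G.verts C₂ := hw ▸ rfl
  refine ⟨C₁, C₂, h₁, h₂, fun hC => ?_, w, w, hw'.1, hw'.2, .refl G _ w⟩
  obtain ⟨e, he⟩ := h₁.nonempty
  exact disjoint_left.1 hdisj he (hC ▸ he)

theorem IsDumbbell.hasLinkedCycles (h : G.IsDumbbell S) : G.HasLinkedCycles S := by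
  obtain ⟨C₁, C₂, u, w, es, vs, h₁, h₂, hdisj, hP, -, hu, hw, -, -, -⟩ := h
  refine ⟨C₁, C₂, h₁, h₂, fun hC => ?_, u, w, hu, hw, ⟨es, vs, hP.1⟩⟩
  obtain ⟨e, he⟩ := h₁.nonempty
  exact disjoint_left.1 (disjoint_of_disjoint_verts hdisj) he (hC ▸ he)

theorem IsTheta.hasLinkedCycles (h : G.IsTheta S) : G.HasLinkedCycles S := by
  obtain ⟨u, w, es₁, es₂, es₃, vs₁, vs₂, vs₃, huw, h₁, h₂, h₃, h₁₂, h₁₃, h₂₃, hv₁₂, hv₁₃, -,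
    rfl⟩ := h
  have hA := h₁.isCycle_append_reverse h₂ huw h₁₂ hv₁₂
  have hB := h₁.isCycle_append_reverse h₃ huw h₁₃ hv₁₃
  refine ⟨_, _, ⟨u, _, _, hA, rfl⟩, ⟨u, _, _, hB, rfl⟩, fun hAB => ?_, u, u,
    by rw [hA.verts_eq]; exact hA.mem, by rw [hB.verts_eq]; exact hB.mem, .refl G _ u⟩
  obtain ⟨e, he⟩ := List.exists_mem_of_ne_nil _ (h₂.1.ne_nil huw)
  have he' : e ∈ {e | e ∈ es₁ ++ es₂.reverse} := by simp [he]
  rw [hAB] at he'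
  simp only [mem_ofPred_eq, List.mem_append, List.mem_reverse] at he'
  rcases he' with he₁ | he₃
  exacts [h₁₂ e ⟨he₁, he⟩, h₂₃ e ⟨he, he₃⟩]

theorem IsBicycle.hasLinkedCycles (h : G.IsBicycle S) : G.HasLinkedCycles S := by
  rcases h with h | h | h
  exacts [h.hasLinkedCycles, h.hasLinkedCycles, h.hasLinkedCycles]

/-! ### Degrees -/

open Classical in
theorem sum_incidence_eq_two {T : Finset V} {z : Sym2 V} (hz : ∀ v ∈ z, v ∈ T) :
    ∑ v ∈ T, ((if v ∈ z then 1 else 0) + if z = s(v, v) then 1 else 0) = 2 := by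
  induction z using Sym2.ind with
  | h p q =>
    have hp : p ∈ T := hz p (Sym2.mem_mk_left p q)
    have hq : q ∈ T := hz q (Sym2.mem_mk_right p q)
    simp only [Finset.sum_add_distrib, Finset.sum_boole]
    rcases eq_or_ne p q with rfl | hpq
    · simp [Finset.filter_eq, hp, eq_comm]
    · have hloop : ∀ x, ¬ s(p, q) = s(x, x) := fun x h => hpq (by simp_all)
      have hpair : {x ∈ T | x ∈ s(p, q)} = {p, q} := by
        ext x
        simp only [Finset.mem_filter, Sym2.mem_iff, Finset.mem_insert, Finset.mem_singleton]
        exact ⟨And.right, by rintro (rfl | rfl) <;> simp [hp, hq]⟩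
      simp only [hloop, Finset.filter_false, Finset.card_empty, CharP.cast_eq_zero, add_zero,
        hpair, Finset.card_pair hpq, Nat.cast_ofNat]

theorem sum_degree_eq (hX : X.Finite) {T : Finset V} (hT : G.verts X ⊆ T) :
    ∑ v ∈ T, G.degree X v = 2 * X.ncard := by
  classical
  lift X to Finset E using hX
  have hdeg : ∀ v, G.degree X v =
      ∑ e ∈ X, ((if v ∈ G.inc e then 1 else 0) + if G.inc e = s(v, v) then 1 else 0) := by
    intro v
    simp only [Finset.sum_add_distrib, Finset.sum_boole, Nat.cast_id, ← ncard_coe_finset,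
      Finset.coe_filter, degree, Finset.mem_coe]
  simp_rw [hdeg]
  rw [Finset.sum_comm, Finset.sum_congr rfl fun e he => sum_incidence_eq_two fun v hv =>
    hT ⟨e, he, hv⟩, ncard_coe_finset, Finset.sum_const, smul_eq_mul, mul_comm]

theorem degree_mono (h : S ⊆ X) (hX : X.Finite) : G.degree S v ≤ G.degree X v :=
  add_le_add (ncard_le_ncard (fun _ hf => ⟨h hf.1, hf.2⟩) (hX.subset fun _ hf => hf.1))
    (ncard_le_ncard (fun _ hf => ⟨h hf.1, hf.2⟩) (hX.subset fun _ hf => hf.1))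

theorem degree_lt_degree (hS : S ⊆ X) (hX : X.Finite) (he : e ∈ X) (heS : e ∉ S)
    (hv : v ∈ G.inc e) : G.degree S v < G.degree X v := by
  refine add_lt_add_of_lt_of_le (ncard_lt_ncard ⟨fun _ hf => ⟨hS hf.1, hf.2⟩, fun hsub => ?_⟩
    (hX.subset fun _ hf => hf.1))
    (ncard_le_ncard (fun _ hf => ⟨hS hf.1, hf.2⟩) (hX.subset fun _ hf => hf.1))
  exact heS (hsub ⟨he, hv⟩).1

theorem two_le_degree_of_ne (hX : X.Finite) (he : e ∈ X) (hf : f ∈ X) (hef : e ≠ f)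
    (hve : v ∈ G.inc e) (hvf : v ∈ G.inc f) : 2 ≤ G.degree X v := by
  have : ({e, f} : Set E).ncard ≤ {g ∈ X | v ∈ G.inc g}.ncard :=
    ncard_le_ncard (by rintro g (rfl | rfl) <;> exact ⟨‹_›, ‹_›⟩) (hX.subset fun g hg => hg.1)
  rw [ncard_pair hef] at this
  exact this.trans (Nat.le_add_right _ _)

theorem two_le_degree_of_loop (hX : X.Finite) (he : e ∈ X) (hloop : G.inc e = s(v, v)) :
    2 ≤ G.degree X v := by
  have h₁ : 0 < {g ∈ X | v ∈ G.inc g}.ncard :=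
    (ncard_pos (hX.subset fun _ hg => hg.1)).2 ⟨e, he, hloop ▸ Sym2.mem_mk_left v v⟩
  have h₂ : 0 < {g ∈ X | G.inc g = s(v, v)}.ncard :=
    (ncard_pos (hX.subset fun _ hg => hg.1)).2 ⟨e, he, hloop⟩
  exact add_le_add (Nat.one_le_iff_ne_zero.2 h₁.ne') (Nat.one_le_iff_ne_zero.2 h₂.ne')

theorem IsCycle.two_le_degree (h : G.IsCycle I v es vs) (hx : x ∈ vs) :
    2 ≤ G.degree {e | e ∈ es} x := by
  obtain ⟨es', vs', hc, hes, -⟩ := h.rotate hx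
  have hset : {e | e ∈ es} = {e | e ∈ es'} := by simp [hes.mem_iff]
  rw [hset]
  obtain ⟨e, es'', rfl⟩ := List.exists_cons_of_ne_nil hc.2.1
  obtain rfl | ⟨es₀, f, hf⟩ := List.eq_nil_or_concat es''
  · cases hc.1.1 with
    | @cons _ b _ _ vs hI hinc hw =>
      obtain rfl : b = x := by cases hw; exact hc.1.2
      exact two_le_degree_of_loop (List.finite_toSet _) (by simp) hinc
  · rw [hf, List.concat_eq_append, ← List.cons_append] at hc ⊢
    have hfe : e ≠ f := fun hef => (List.nodup_cons.1 hc.2.2.1).1 (by simp [hef])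
    exact two_le_degree_of_ne (List.finite_toSet _) (by simp) (by simp) hfe hc.1.1.inc_head
      hc.1.inc_getLast

theorem IsCycleIn.two_le_degree (h : G.IsCycleIn I C) (hv : v ∈ G.verts C) :
    2 ≤ G.degree C v := by
  obtain ⟨w, es, vs, hc, rfl⟩ := h
  exact hc.two_le_degree (by simpa [hc.verts_eq] using hv)

theorem IsWalkFrom.two_le_degree_of_mem_dropLast (h : G.IsWalkFrom I u es vs w) (hes : es.Nodup)
    (hvs : vs.Nodup) (hx : x ∈ vs.dropLast) : 2 ≤ G.degree {e | e ∈ es} x := by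
  obtain ⟨es₁, es₂, vs₁, vs₂, rfl, rfl, hes₁, h₁, h₂⟩ := h.split (List.dropLast_subset _ hx)
  have hvs₁ : vs₁ ≠ [] := mt h₁.1.eq_nil_iff.2 hes₁
  have hes₂ : es₂ ≠ [] := by
    rintro rfl
    obtain rfl := h₂.1.eq_nil_iff.1 rfl
    rw [List.append_nil] at hx hvs
    exact getLast_not_mem_dropLast hvs₁ hvs (h₁.getLast_eq hvs₁ ▸ hx)
  obtain ⟨es₀, f, rfl⟩ := (List.eq_nil_or_concat' es₁).resolve_left hes₁
  obtain ⟨g, es₃, rfl⟩ := List.exists_cons_of_ne_nil hes₂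
  have hfg : f ≠ g := fun hfg =>
    List.disjoint_of_nodup_append hes (a := f) (by simp) (by simp [hfg])
  exact two_le_degree_of_ne (List.finite_toSet _) (by simp) (by simp) hfg h₁.inc_getLast
    h₂.1.inc_head

/-! ### Tight sets and ears -/

theorem exists_mem_verts (he : e ∈ X) : ∃ v ∈ G.verts X, v ∈ G.inc e := by
  induction h : G.inc e using Sym2.ind with
  | h p q => exact ⟨p, ⟨e, he, h ▸ Sym2.mem_mk_left p q⟩, Sym2.mem_mk_left p q⟩

theorem Reachable.exists_boundary_edge (h : G.Reachable C u y) (hu : u ∈ G.verts S)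
    (hf : f ∈ C \ S) (hy : y ∈ G.inc f) : ∃ g ∈ C \ S, ∃ z ∈ G.verts S, z ∈ G.inc g := by
  obtain ⟨es, vs, hw, rfl⟩ := h
  induction hw with
  | nil v => exact ⟨f, hf, v, hu, hy⟩
  | @cons a b e es vs he hinc _ ih =>
    by_cases heS : e ∈ S
    · exact ih ⟨e, heS, by simp [hinc]⟩ hy
    · exact ⟨e, ⟨he, heS⟩, a, hu, by simp [hinc]⟩

/-- Sum degrees over `V(C)`: the vertices outside `V(S)` have degree at least two in `C`, and `z`
gains the edge `g`. -/
theorem ncard_add_ncard_verts_lt (hC : C.Finite) (hSC : S ⊆ C)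
    (hdeg : ∀ v ∈ G.verts C, 2 ≤ G.degree C v) (hg : g ∈ C \ S) (hz : z ∈ G.verts S)
    (hzg : z ∈ G.inc g) : S.ncard + (G.verts C).ncard < C.ncard + (G.verts S).ncard := by
  classical
  have hVS := verts_finite (G := G) (hC.subset hSC)
  have hVC := verts_finite (G := G) hC
  set TS := hVS.toFinset
  set TC := hVC.toFinset
  have hTSC : TS ⊆ TC := by simpa [TS, TC] using verts_mono hSC
  have hsumS : ∑ v ∈ TS, G.degree S v = 2 * S.ncard := sum_degree_eq (hC.subset hSC) (by simp [TS])
  have hsumC : ∑ v ∈ TC, G.degree C v = 2 * C.ncard := sum_degree_eq hC (by simp [TC])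
  have hlt : ∑ v ∈ TS, G.degree S v < ∑ v ∈ TS, G.degree C v :=
    Finset.sum_lt_sum (fun v _ => degree_mono hSC hC)
      ⟨z, by simpa [TS] using hz, degree_lt_degree hSC hC hg.1 hg.2 hzg⟩
  have hle : 2 * (TC \ TS).card ≤ ∑ v ∈ TC \ TS, G.degree C v := by
    rw [mul_comm, ← smul_eq_mul, ← Finset.sum_const]
    exact Finset.sum_le_sum fun v hv => hdeg v (by simpa [TC] using (Finset.mem_sdiff.1 hv).1)
  have hsplit := Finset.sum_sdiff (f := fun v => G.degree C v) hTSC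
  have hcard := Finset.card_sdiff_add_card_eq_card hTSC
  have hVScard : (G.verts S).ncard = TS.card := ncard_eq_toFinset_card _ hVS
  have hVCcard : (G.verts C).ncard = TC.card := ncard_eq_toFinset_card _ hVC
  omega

/-- Shared by all bicycles, and enough to make them minimal (`IsTight.eq_of_subset`). -/
def IsTight (G : Multigraph V E) (C : Set E) : Prop :=
  C.Finite ∧ C.ncard = (G.verts C).ncard + 1 ∧ (∀ v ∈ G.verts C, 2 ≤ G.degree C v) ∧
    ∀ a ∈ G.verts C, ∀ b ∈ G.verts C, G.Reachable C a b

theorem IsTight.eq_of_subset (hC : G.IsTight C) (hS : G.IsTight S) (hSC : S ⊆ C) : S = C := by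
  by_contra hne
  obtain ⟨f, hfC, hfS⟩ := exists_of_ssubset (hSC.ssubset_of_ne hne)
  obtain ⟨e, he⟩ : S.Nonempty := nonempty_of_ncard_ne_zero (by rw [hS.2.1]; omega)
  obtain ⟨u, hu, -⟩ := exists_mem_verts (G := G) he
  obtain ⟨y, hy, hyf⟩ := exists_mem_verts (G := G) hfC
  obtain ⟨g, hg, z, hz, hzg⟩ :=
    (hC.2.2.2 u (verts_mono hSC hu) y hy).exists_boundary_edge hu ⟨hfC, hfS⟩ hyf
  have := ncard_add_ncard_verts_lt hC.1 hSC hC.2.2.1 hg hz hzg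
  rw [hC.2.1, hS.2.1] at this
  omega

/-- A path, or a cycle if `u = w`, attached to `X` at its ends and otherwise disjoint from it. -/
def IsEar (G : Multigraph V E) (X : Set E) (u : V) (es : List E) (vs : List V) (w : V) : Prop :=
  G.IsWalkFrom univ u es vs w ∧ es ≠ [] ∧ es.Nodup ∧ vs.Nodup ∧ u ∈ G.verts X ∧
    w ∈ G.verts X ∧ (∀ x ∈ vs.dropLast, x ∉ G.verts X) ∧ ∀ e ∈ es, e ∉ X

theorem IsEar.verts_union (h : G.IsEar X u es vs w) :
    G.verts (X ∪ {e | e ∈ es}) = G.verts X ∪ {x | x ∈ vs.dropLast} := by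
  obtain ⟨hw, hes, -, -, hu, hwX, -, -⟩ := h
  rw [Multigraph.verts_union, hw.1.verts_eq hes]
  refine Subset.antisymm (union_subset subset_union_left fun x hx => ?_)
    (union_subset_union_right _ fun x hx => List.mem_cons_of_mem _ (List.dropLast_subset _ hx))
  rcases List.mem_cons.1 hx with rfl | hx
  · exact Or.inl hu
  by_cases hxw : x = w
  · exact Or.inl (hxw ▸ hwX)
  · exact Or.inr (List.mem_dropLast_of_mem_of_ne_getLast hx (hw.getLast_eq _ ▸ hxw))

theorem IsEar.ncard_union (h : G.IsEar X u es vs w) (hX : X.Finite) :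
    (X ∪ {e | e ∈ es}).ncard + (G.verts X).ncard =
      X.ncard + (G.verts (X ∪ {e | e ∈ es})).ncard + 1 := by
  rw [h.verts_union]
  obtain ⟨hw, hes, hnde, hndv, -, -, hint, hedge⟩ := h
  have hdisjE : Disjoint X {e | e ∈ es} := disjoint_right.2 hedge
  have hdisjV : Disjoint (G.verts X) {x | x ∈ vs.dropLast} := disjoint_right.2 hint
  rw [ncard_union_eq hdisjE hX (List.finite_toSet _),
    ncard_union_eq hdisjV (verts_finite hX) (List.finite_toSet _),
    ncard_setOf_mem_of_nodup hnde,
    ncard_setOf_mem_of_nodup (hndv.sublist (List.dropLast_sublist _)), List.length_dropLast,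
    hw.1.length_eq]
  have := List.length_pos_iff.2 hes
  omega

theorem IsEar.two_le_degree (h : G.IsEar X u es vs w)
    (hX : X.Finite) (hdeg : ∀ v ∈ G.verts X, 2 ≤ G.degree X v) :
    ∀ v ∈ G.verts (X ∪ {e | e ∈ es}), 2 ≤ G.degree (X ∪ {e | e ∈ es}) v := by
  have hfin : (X ∪ {e | e ∈ es}).Finite := hX.union (List.finite_toSet _)
  rw [h.verts_union]
  rintro v (hv | hv)
  · exact (hdeg v hv).trans (degree_mono subset_union_left hfin)
  · exact (h.1.two_le_degree_of_mem_dropLast h.2.2.1 h.2.2.2.1 hv).trans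
      (degree_mono subset_union_right hfin)

theorem IsEar.reachable (h : G.IsEar X u es vs w)
    (hconn : ∀ a ∈ G.verts X, G.Reachable X a u ∨ G.Reachable X a w) :
    ∀ a ∈ G.verts (X ∪ {e | e ∈ es}), G.Reachable (X ∪ {e | e ∈ es}) a u := by
  have hwu : G.Reachable (X ∪ {e | e ∈ es}) w u :=
    Reachable.symm ⟨es, vs, h.1.1.mono fun e he => Or.inr he, h.1.2⟩
  rw [h.verts_union]
  rintro a (ha | ha)
  · rcases hconn a ha with hau | haw
    · exact hau.mono subset_union_left
    · exact (haw.mono subset_union_left).trans hwu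
  · exact ((h.1.1.reachable_of_mem (List.mem_cons_of_mem _ (List.dropLast_subset _ ha))).mono
      subset_union_right).symm

theorem IsEar.isTight (h : G.IsEar X u es vs w) (hX : X.Finite)
    (hcard : X.ncard = (G.verts X).ncard)
    (hdeg : ∀ v ∈ G.verts X, 2 ≤ G.degree X v)
    (hconn : ∀ a ∈ G.verts X, G.Reachable X a u ∨ G.Reachable X a w) :
    G.IsTight (X ∪ {e | e ∈ es}) := by
  refine ⟨hX.union (List.finite_toSet _), ?_, h.two_le_degree hX hdeg, fun a ha b hb =>
    (h.reachable hconn a ha).trans (h.reachable hconn b hb).symm⟩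
  have := h.ncard_union hX
  omega

theorem IsFigureEight.isTight (h : G.IsFigureEight S) : G.IsTight S := by
  obtain ⟨C₁, C₂, h₁, h₂, hdisj, ⟨w, hw⟩, rfl⟩ := h
  have hw' : w ∈ G.verts C₁ ∩ G.verts C₂ := hw ▸ rfl
  obtain ⟨es, vs, hc, rfl⟩ := h₂.exists_isCycle hw'.2
  have hear : G.IsEar C₁ w es vs w := by
    refine ⟨⟨hc.1.1.mono fun _ _ => trivial, hc.1.2⟩, hc.2.1, hc.2.2.1, hc.2.2.2, hw'.1, hw'.1,
      fun x hx hx₁ => ?_, fun e he he₁ => disjoint_left.1 hdisj he₁ he⟩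
    have hx₂ : x ∈ G.verts {e | e ∈ es} := by
      rw [hc.verts_eq]
      exact List.dropLast_subset _ hx
    have hxw : x ∈ G.verts C₁ ∩ G.verts {e | e ∈ es} := ⟨hx₁, hx₂⟩
    obtain rfl : x = w := by rwa [hw] at hxw
    exact getLast_not_mem_dropLast hc.vs_ne_nil hc.2.2.2 (by rwa [hc.1.getLast_eq])
  exact hear.isTight h₁.finite h₁.ncard_eq (fun v => h₁.two_le_degree)
    fun a ha => Or.inl (h₁.reachable ha hw'.1)

theorem IsDumbbell.isTight (h : G.IsDumbbell S) : G.IsTight S := by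
  obtain ⟨C₁, C₂, u, w, es, vs, h₁, h₂, hdisj, hP, hes, hu, hw, hint, hedge, rfl⟩ := h
  have hfin := h₁.finite.union h₂.finite
  have hear : G.IsEar (C₁ ∪ C₂) u es vs w :=
    ⟨⟨hP.1.1.mono fun _ _ => trivial, hP.1.2⟩, hes, hP.nodup_edges, hP.2.of_cons,
      verts_union (G := G) ▸ Or.inl hu, verts_union (G := G) ▸ Or.inr hw,
      verts_union (G := G) ▸ hint, hedge⟩
  refine hear.isTight hfin ?_ ?_ ?_ <;> rw [verts_union]
  · rw [ncard_union_eq (disjoint_of_disjoint_verts hdisj) h₁.finite h₂.finite,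
      ncard_union_eq hdisj (verts_finite h₁.finite) (verts_finite h₂.finite), h₁.ncard_eq,
      h₂.ncard_eq]
  · rintro v (hv | hv)
    · exact (h₁.two_le_degree hv).trans (degree_mono subset_union_left hfin)
    · exact (h₂.two_le_degree hv).trans (degree_mono subset_union_right hfin)
  · rintro a (ha | ha)
    · exact Or.inl ((h₁.reachable ha hu).mono subset_union_left)
    · exact Or.inr ((h₂.reachable ha hw).mono subset_union_right)

theorem IsTheta.isTight (h : G.IsTheta S) : G.IsTight S := by
  obtain ⟨u, w, es₁, es₂, es₃, vs₁, vs₂, vs₃, huw, h₁, h₂, h₃, h₁₂, h₁₃, h₂₃, hv₁₂, hv₁₃, hv₂₃,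
    rfl⟩ := h
  have hc := h₁.isCycle_append_reverse h₂ huw h₁₂ hv₁₂
  have hX : G.IsCycleIn _ {e | e ∈ es₁ ++ es₂.reverse} := ⟨u, _, _, hc, rfl⟩
  have hu : u ∈ G.verts {e | e ∈ es₁ ++ es₂.reverse} := by
    rw [hc.verts_eq]
    exact hc.mem
  have hear : G.IsEar {e | e ∈ es₁ ++ es₂.reverse} u es₃ vs₃ w := by
    refine ⟨⟨h₃.1.1.mono fun _ _ => trivial, h₃.1.2⟩, h₃.1.ne_nil huw, h₃.nodup_edges, h₃.2.of_cons,
      hu, ?_, fun x hx hxX => ?_, fun e he heX => ?_⟩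
    · rw [hc.verts_eq]
      exact List.mem_append_left _ (h₁.1.mem_of_ne_nil (h₁.1.ne_nil huw))
    · have hxu : x ≠ u := fun hxu => (List.nodup_cons.1 h₃.2).1 (hxu ▸ List.dropLast_subset _ hx)
      have hxw : x ≠ w := fun hxw => getLast_not_mem_dropLast (List.ne_nil_of_mem
        (List.dropLast_subset _ hx)) h₃.2.of_cons (by rwa [h₃.1.getLast_eq, ← hxw])
      rw [hc.verts_eq, mem_ofPred_eq, List.mem_append, List.mem_reverse,
        List.dropLast_cons_of_ne_nil (mt h₂.1.1.eq_nil_iff.2 (h₂.1.ne_nil huw)),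
        List.mem_cons] at hxX
      rcases hxX with hx₁ | rfl | hx₂
      · exact hv₁₃ x ⟨List.mem_dropLast_of_mem_of_ne_getLast hx₁ (by rwa [h₁.1.getLast_eq]), hx⟩
      · exact hxu rfl
      · exact hv₂₃ x ⟨hx₂, hx⟩
    · rw [mem_ofPred_eq, List.mem_append, List.mem_reverse] at heX
      exact heX.elim (fun he₁ => h₁₃ e ⟨he₁, he⟩) fun he₂ => h₂₃ e ⟨he₂, he⟩
  have hset : {e | e ∈ es₁ ∨ e ∈ es₂ ∨ e ∈ es₃} = {e | e ∈ es₁ ++ es₂.reverse} ∪ {e | e ∈ es₃} := by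
    ext e
    simp [or_assoc]
  rw [hset]
  exact hear.isTight hX.finite hX.ncard_eq (fun v => hX.two_le_degree)
    fun a ha => Or.inl (hX.reachable ha hu)

theorem IsBicycle.isTight (h : G.IsBicycle S) : G.IsTight S := by
  rcases h with h | h | h
  exacts [h.isTight, h.isTight, h.isTight]

/-! ### Dependent sets contain bicycles -/

theorem IsPath.exists_subpath_crossing (h : G.IsPath I a es vs b) (hAB : Disjoint A B) (ha : a ∈ A)
    (hb : b ∈ B) : ∃ u w es' vs', G.IsPath I u es' vs' w ∧ es' ≠ [] ∧ u ∈ A ∧ w ∈ B ∧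
      ∀ x ∈ vs'.dropLast, x ∉ A ∪ B := by
  induction hn : es.length using Nat.strong_induction_on generalizing a b es vs with
  | _ n ih =>
    subst hn
    by_cases hx : ∃ x ∈ vs.dropLast, x ∈ A ∪ B
    · obtain ⟨x, hx, hxA | hxB⟩ := hx <;>
        obtain ⟨es₁, es₂, vs₁, vs₂, rfl, hes₁, hes₂, h₁, h₂⟩ := h.split hx
      · exact ih _ (by simp [List.length_pos_iff.2 hes₁]) h₂ hxA hb rfl
      · exact ih _ (by simp [List.length_pos_iff.2 hes₂]) h₁ ha hxB rfl
    · push Not at hx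
      exact ⟨a, b, es, vs, h, h.1.ne_nil (disjoint_left.1 hAB ha <| · ▸ hb), ha, hb, hx⟩

theorem IsPath.exists_subpath_of_mem (h : G.IsPath I a es vs b) (ha : a ∈ A) (hb : b ∈ A)
    (he : e ∈ es) : ∃ u w es' vs', G.IsPath I u es' vs' w ∧ e ∈ es' ∧ u ∈ A ∧ w ∈ A ∧
      ∀ x ∈ vs'.dropLast, x ∉ A := by
  induction hn : es.length using Nat.strong_induction_on generalizing a b es vs with
  | _ n ih =>
    subst hn
    by_cases hx : ∃ x ∈ vs.dropLast, x ∈ A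
    · obtain ⟨x, hx, hxA⟩ := hx
      obtain ⟨es₁, es₂, vs₁, vs₂, rfl, hes₁, hes₂, h₁, h₂⟩ := h.split hx
      rcases List.mem_append.1 he with he | he
      · exact ih _ (by simp [List.length_pos_iff.2 hes₂]) h₁ ha hxA he rfl
      · exact ih _ (by simp [List.length_pos_iff.2 hes₁]) h₂ hxA hb he rfl
    · push Not at hx
      exact ⟨a, b, es, vs, h, he, ha, hb, hx⟩

theorem IsWalkFrom.not_mem_of_forall_not_mem_verts (h : G.IsWalkFrom I u es vs w)
    (hint : ∀ x ∈ vs.dropLast, x ∉ G.verts Z) (he : e ∈ es) (heZ : e ∉ Z) :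
    ∀ f ∈ es, f ∉ Z := by
  intro f hf hfZ
  obtain ⟨p, q, hpq, -, -, hes | hp | hq⟩ := h.exists_inc_eq hf
  · exact heZ (by simp_all)
  · exact hint p hp ⟨f, hfZ, by simp [hpq]⟩
  · exact hint q hq ⟨f, hfZ, by simp [hpq]⟩

theorem IsWalkFrom.not_mem_union (h : G.IsWalkFrom I u es vs w)
    (hdisj : Disjoint (G.verts Z₁) (G.verts Z₂)) (hu : u ∈ G.verts Z₁) (hw : w ∈ G.verts Z₂)
    (hint : ∀ x ∈ vs.dropLast, x ∉ G.verts Z₁ ∪ G.verts Z₂) : ∀ f ∈ es, f ∉ Z₁ ∪ Z₂ := by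
  rintro f hf hfZ
  obtain ⟨p, q, hpq, hp, hq, -⟩ := h.exists_inc_eq hf
  rcases hfZ with hf₁ | hf₂
  · have hq₁ : q ∈ G.verts Z₁ := ⟨f, hf₁, by simp [hpq]⟩
    rcases hq with rfl | hq
    exacts [disjoint_left.1 hdisj hq₁ hw, hint q hq (Or.inl hq₁)]
  · have hp₂ : p ∈ G.verts Z₂ := ⟨f, hf₂, by simp [hpq]⟩
    rcases hp with rfl | hp
    exacts [disjoint_left.1 hdisj hu hp₂, hint p hp (Or.inr hp₂)]

theorem exists_isDumbbell_subset (h₁ : G.IsCycleIn I Z₁) (h₂ : G.IsCycleIn I Z₂)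
    (hdisj : Disjoint (G.verts Z₁) (G.verts Z₂)) (ha : a ∈ G.verts Z₁) (hb : b ∈ G.verts Z₂)
    (hab : G.Reachable I a b) : ∃ S ⊆ I, G.IsDumbbell S := by
  obtain ⟨es₀, vs₀, hW⟩ := hab
  obtain ⟨es₁, vs₁, hP₁, -, -⟩ := hW.exists_isPath
  obtain ⟨u, w, es, vs, hP, hes, hu, hw, hint⟩ := hP₁.exists_subpath_crossing hdisj ha hb
  refine ⟨Z₁ ∪ Z₂ ∪ {e | e ∈ es},
    union_subset (union_subset h₁.subset h₂.subset) fun e he => hP.1.1.mem_of_mem he,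
    Z₁, Z₂, u, w, es, vs, h₁.mono (subset_union_left.trans subset_union_left),
    h₂.mono (subset_union_right.trans subset_union_left), hdisj, hP.mono fun e he => Or.inr he,
    hes, hu, hw, hint, hP.1.not_mem_union hdisj hu hw hint, rfl⟩

theorem IsCycle.isTheta_union {esR : List E} {vsR : List V} (hC : G.IsCycle I a es vs)
    (hR : G.IsPath I a esR vsR b) (hab : a ≠ b) (hb : b ∈ vs)
    (hint : ∀ x ∈ vsR.dropLast, x ∉ vs) (hedge : ∀ e ∈ esR, e ∉ es) :
    G.IsTheta ({e | e ∈ es} ∪ {e | e ∈ esR}) := by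
  obtain ⟨esP, vsP, esQ, vsQ, hP, hQ, hPQ, hdPQ, hvPQ, hvP, hvQ⟩ := hC.exists_isPath_isPath hb hab
  have hset : {e | e ∈ es} ∪ {e | e ∈ esR} = {e | e ∈ esP ∨ e ∈ esQ ∨ e ∈ esR} := by
    ext e
    simp [hPQ, or_assoc]
  rw [hset]
  exact ⟨a, b, esP, esQ, esR, vsP, vsQ, vsR, hab, hP.mono fun e he => Or.inl he,
    hQ.mono fun e he => Or.inr (Or.inl he), hR.mono fun e he => Or.inr (Or.inr he), hdPQ,
    fun e ⟨he, heR⟩ => hedge e heR ((hPQ e).2 (Or.inl he)),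
    fun e ⟨he, heR⟩ => hedge e heR ((hPQ e).2 (Or.inr he)), hvPQ,
    fun x ⟨hx, hxR⟩ => hint x hxR (hvP x (List.dropLast_subset _ hx)),
    fun x ⟨hx, hxR⟩ => hint x hxR (hvQ x (List.dropLast_subset _ hx)), rfl⟩

theorem IsCycleIn.disjoint_of_verts_inter_eq (h₁ : G.IsCycleIn I Z₁) (h₂ : G.IsCycleIn I Z₂)
    (hne : Z₁ ≠ Z₂) (hx : G.verts Z₁ ∩ G.verts Z₂ = {x}) : Disjoint Z₁ Z₂ := by
  refine disjoint_left.2 fun f hf₁ hf₂ => hne ?_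
  have hloop : G.inc f = s(x, x) := by
    have hends : ∀ y ∈ G.inc f, y = x := fun y hy =>
      hx.subset ⟨⟨f, hf₁, hy⟩, ⟨f, hf₂, hy⟩⟩
    induction hpq : G.inc f using Sym2.ind with
    | h p q => rw [hpq] at hends; rw [hends p (by simp), hends q (by simp)]
  obtain ⟨v₁, es₁, vs₁, hc₁, rfl⟩ := h₁
  obtain ⟨v₂, es₂, vs₂, hc₂, rfl⟩ := h₂
  rw [hc₁.eq_singleton_of_loop hf₁ hloop, hc₂.eq_singleton_of_loop hf₂ hloop]

theorem exists_isFigureEight_or_isTheta_subset (h₁ : G.IsCycleIn I Z₁) (h₂ : G.IsCycleIn I Z₂)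
    (he : e ∈ Z₂) (he₁ : e ∉ Z₁) (hx : x ∈ G.verts Z₁ ∩ G.verts Z₂) :
    ∃ S ⊆ I, G.IsFigureEight S ∨ G.IsTheta S := by
  obtain ⟨es, vs, hc, rfl⟩ := h₂.exists_isCycle hx.2
  by_cases hint : ∀ t ∈ vs.dropLast, t ∉ G.verts Z₁
  · have hinter : G.verts Z₁ ∩ G.verts {e | e ∈ es} = {x} := by
      refine Subset.antisymm (fun t ⟨ht₁, ht₂⟩ => ?_) (singleton_subset_iff.2 hx)
      rw [hc.verts_eq] at ht₂
      by_contra htx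
      exact hint t (List.mem_dropLast_of_mem_of_ne_getLast ht₂ (by rwa [hc.1.getLast_eq])) ht₁
    have hne : Z₁ ≠ {e | e ∈ es} := fun h => he₁ (h ▸ he)
    exact ⟨_, union_subset h₁.subset h₂.subset, Or.inl ⟨Z₁, _, h₁.mono subset_union_left,
      h₂.mono subset_union_right, h₁.disjoint_of_verts_inter_eq h₂ hne hinter, ⟨x, hinter⟩, rfl⟩⟩
  push Not at hint
  obtain ⟨t, ht, ht₁⟩ := hint
  have hxt : x ≠ t := fun hxt =>
    getLast_not_mem_dropLast hc.vs_ne_nil hc.2.2.2 (by rwa [hc.1.getLast_eq, hxt])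
  -- `Z₂` returns to `V(Z₁)` at `t`; on the half of `Z₂` from `x` to `t` that contains `e`, the
  -- segment around `e` between consecutive visits to `V(Z₁)` completes `Z₁` to a theta.
  obtain ⟨esP, vsP, esQ, vsQ, hP, hQ, hPQ, -⟩ :=
    hc.exists_isPath_isPath (List.dropLast_subset _ ht) hxt
  obtain ⟨es₀, vs₀, hR₀, heR₀⟩ : ∃ es₀ vs₀, G.IsPath I x es₀ vs₀ t ∧ e ∈ es₀ := by
    rcases (hPQ e).1 he with heP | heQ
    exacts [⟨_, _, hP, heP⟩, ⟨_, _, hQ, heQ⟩]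
  obtain ⟨a, b, esR, vsR, hR, heR, ha, hb, hRint⟩ := hR₀.exists_subpath_of_mem hx.1 ht₁ heR₀
  have hedge := hR.1.not_mem_of_forall_not_mem_verts hRint heR he₁
  obtain ⟨es₁, vs₁, hc₁, rfl⟩ := h₁.exists_isCycle ha
  rw [hc₁.verts_eq] at hb hRint
  exact ⟨_, union_subset h₁.subset fun f hf => hR.1.1.mem_of_mem hf,
    Or.inr (hc₁.isTheta_union hR (hR.ne_of_ne_nil (List.ne_nil_of_mem heR)) hb hRint hedge)⟩

theorem HasLinkedCycles.exists_isBicycle_subset (h : G.HasLinkedCycles I) :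
    ∃ S ⊆ I, G.IsBicycle S := by
  obtain ⟨Z₁, Z₂, h₁, h₂, hne, a, b, ha, hb, hab⟩ := h
  by_cases hdisj : Disjoint (G.verts Z₁) (G.verts Z₂)
  · obtain ⟨S, hSI, hS⟩ := exists_isDumbbell_subset h₁ h₂ hdisj ha hb hab
    exact ⟨S, hSI, Or.inr (Or.inl hS)⟩
  obtain ⟨x, hx⟩ := not_disjoint_iff_nonempty_inter.1 hdisj
  obtain ⟨S, hSI, hS | hS⟩ : ∃ S ⊆ I, G.IsFigureEight S ∨ G.IsTheta S := by
    by_cases hsub : Z₂ ⊆ Z₁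
    · obtain ⟨e, he₁, he₂⟩ := exists_of_ssubset (hsub.ssubset_of_ne hne.symm)
      exact exists_isFigureEight_or_isTheta_subset h₂ h₁ he₁ he₂ ⟨hx.2, hx.1⟩
    · obtain ⟨e, he₂, he₁⟩ := not_subset.1 hsub
      exact exists_isFigureEight_or_isTheta_subset h₁ h₂ he₂ he₁ hx
  exacts [⟨S, hSI, Or.inl hS⟩, ⟨S, hSI, Or.inr (Or.inr hS)⟩]

end Multigraph

/-- The circuits of the bicircular matroid `B(G)` are exactly the edge
sets of subdivisions of: two loops at a vertex, a dumbbell, or a theta graph. -/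
theorem bicircular_circuit_iff {V E : Type*} (G : Multigraph V E) (M : Matroid E)
    (hM : Multigraph.IsBicircularOf G M) (C : Set E) :
    Circuit M C ↔ (G.IsFigureEight C ∨ G.IsDumbbell C ∨ G.IsTheta C) := by
  change _ ↔ G.IsBicycle C
  constructor
  · rintro ⟨hC, hmin⟩
    obtain ⟨S, hSC, hS⟩ := (hM.dep_iff.1 hC).exists_isBicycle_subset
    obtain rfl | hSC := hSC.eq_or_ssubset
    · exact hS
    · exact absurd (hM.dep_iff.2 hS.hasLinkedCycles) (hmin S hSC)
  · intro hC
    refine ⟨hM.dep_iff.2 hC.hasLinkedCycles, fun D hDC hD => ?_⟩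
    obtain ⟨S, hSD, hS⟩ := (hM.dep_iff.1 hD).exists_isBicycle_subset
    obtain rfl := hC.isTight.eq_of_subset hS.isTight (hSD.trans hDC.subset)
    exact hDC.not_subset hSD

end Paper
end
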